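/- arXiv:1106.1913 — 6 statements merged into one kernel-verified Lean document; each statement's English description precedes it below -/
import Mathlib

section
/- Let I ⊆ S be a monomial ideal with minimal monomial generators m_1, ..., m_t, and suppose this ordering makes I shellable: for all j < i there exist k < i and an index g ∈ {1,...,n} such that x_g·m_i = lcm(m_k, m_i) and lcm(m_k, m_i) divides lcm(m_j, m_i). Then I has linear quotients with respect to this ordering; more precisely, for every 1 < i ≤ t the colon ideal (m_1, ..., m_{i−1}) : m_i is the ideal generated by the set of variables { x_g : there exists k < i with x_g·m_i = lcm(m_k, m_i) }. -/
open MvPolynomial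

/-!
Everything is read off exponent vectors. A polynomial `f` lies in `(m_j : j < i) : m_i` iff every
monomial `x^u` of `f` has `m_j ≤ u + m_i` for some `j < i`. Such a `j` gives, by shellability, an
`l < i` and a variable `x_g` with `single g 1 + m_i = m_l ⊔ m_i ≤ m_j ⊔ m_i ≤ u + m_i`, so `x_g`
divides `x^u`. Conversely `x_g · m_i = lcm(m_l, m_i)` is a multiple of `m_l`.
-/

namespace MvPolynomial

variable {R σ ι : Type*} [CommSemiring R] (m : ι → σ →₀ ℕ) (T : Set ι) (a : σ →₀ ℕ)

theorem mul_monomial_mem_span_monomial_image_iff {f : MvPolynomial σ R} :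
    f * monomial a 1 ∈ Ideal.span ((fun j => monomial (m j) (1 : R)) '' T) ↔
      ∀ u ∈ f.support, ∃ j ∈ T, m j ≤ u + a := by
  rw [← Set.image_image (fun s => monomial s (1 : R)) m, mem_ideal_span_monomial_image]
  simp only [Set.exists_mem_image, mem_support_iff]
  constructor
  · intro h u hu
    exact h (u + a) (by rwa [coeff_mul_monomial, mul_one])
  · intro h v hv
    rw [coeff_mul_monomial'] at hv
    split_ifs at hv with hav
    · rw [mul_one] at hv
      simpa only [tsub_add_cancel_of_le hav] using h (v - a) hv
    · exact absurd rfl hv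

theorem span_X_le_colon :
    Ideal.span (X '' {g | ∃ l ∈ T, Finsupp.single g 1 + a = m l ⊔ a}) ≤
      (Ideal.span ((fun j => monomial (m j) (1 : R)) '' T)).colon
        (Ideal.span {monomial a (1 : R)}) := by
  refine Ideal.span_le.mpr ?_
  rintro _ ⟨g, ⟨l, hl, hg⟩, rfl⟩
  have hdvd : m l ≤ Finsupp.single g 1 + a := hg ▸ le_sup_left
  have hfactor : (X g : MvPolynomial σ R) * monomial a 1 =
      monomial (Finsupp.single g 1 + a - m l) 1 * monomial (m l) 1 := by
    rw [X, monomial_mul, monomial_mul, tsub_add_cancel_of_le hdvd]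
  rw [SetLike.mem_coe, Ideal.mem_colon_span_singleton, hfactor]
  exact Ideal.mul_mem_left _ _ (Ideal.subset_span ⟨l, hl, rfl⟩)

theorem colon_le_span_X
    (hshell : ∀ j ∈ T, ∃ l ∈ T, ∃ g : σ,
      Finsupp.single g 1 + a = m l ⊔ a ∧ m l ⊔ a ≤ m j ⊔ a) :
    (Ideal.span ((fun j => monomial (m j) (1 : R)) '' T)).colon
        (Ideal.span {monomial a (1 : R)}) ≤
      Ideal.span (X '' {g | ∃ l ∈ T, Finsupp.single g 1 + a = m l ⊔ a}) := by
  intro f hf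
  rw [Ideal.mem_colon_span_singleton, mul_monomial_mem_span_monomial_image_iff] at hf
  rw [mem_ideal_span_X_image]
  intro u hu
  obtain ⟨j, hj, hju⟩ := hf u hu
  obtain ⟨l, hl, g, hg, hlj⟩ := hshell j hj
  have hgu : Finsupp.single g 1 + a ≤ u + a := hg ▸ hlj.trans (sup_le hju le_add_self)
  have hg_pos : 1 ≤ u g := Finsupp.single_le_iff.mp (le_of_add_le_add_right hgu)
  exact ⟨g, ⟨l, hl, hg⟩, by omega⟩

end MvPolynomial

theorem stmt_1_general (k : Type) [Field k] (n t : ℕ)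
    (m : Fin t → (Fin n →₀ ℕ))
    (hshell : ∀ i j : Fin t, j < i → ∃ l : Fin t, l < i ∧ ∃ g : Fin n,
      Finsupp.single g 1 + m i = m l ⊔ m i ∧ m l ⊔ m i ≤ m j ⊔ m i) :
    ∀ i : Fin t, 0 < (i : ℕ) →
      Submodule.colon
        (Ideal.span ((fun j => monomial (m j) (1 : k)) '' {j | j < i}))
        (Ideal.span {monomial (m i) (1 : k)})
      = Ideal.span ((fun g => (X g : MvPolynomial (Fin n) k)) ''
          {g | ∃ l : Fin t, l < i ∧ Finsupp.single g 1 + m i = m l ⊔ m i}) :=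
  fun i _ => le_antisymm (colon_le_span_X m {j | j < i} (m i) (hshell i))
    (span_X_le_colon m {j | j < i} (m i))

/-- Let `I ⊆ S = k[x_1,…,x_n]` be a monomial ideal with minimal monomial
generators `m_1, …, m_t` (encoded by their exponent vectors `m : Fin t → (Fin n →₀ ℕ)`;
minimality means no generator divides another).  Suppose this ordering makes `I` shellable:
for all `j < i` there exist `l < i` and an index `g` such that
`x_g·m_i = lcm(m_l, m_i)` and `lcm(m_l, m_i)` divides `lcm(m_j, m_i)`.
Then `I` has linear quotients with respect to this ordering; more precisely, for every
`1 < i ≤ t` the colon ideal `(m_1, …, m_{i−1}) : m_i` is the ideal generated by the set of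
variables `{ x_g : ∃ l < i, x_g·m_i = lcm(m_l, m_i) }`.
(`lcm` of monomials corresponds to `⊔` on exponent vectors and divisibility to `≤`.) -/
theorem stmt_1 (k : Type) [Field k] (n t : ℕ)
    (m : Fin t → (Fin n →₀ ℕ))
    (hmin : ∀ i j : Fin t, i ≠ j → ¬ m i ≤ m j)
    (hshell : ∀ i j : Fin t, j < i → ∃ l : Fin t, l < i ∧ ∃ g : Fin n,
      Finsupp.single g 1 + m i = m l ⊔ m i ∧ m l ⊔ m i ≤ m j ⊔ m i) :
    ∀ i : Fin t, 0 < (i : ℕ) →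
      Submodule.colon
        (Ideal.span ((fun j => monomial (m j) (1 : k)) '' {j | j < i}))
        (Ideal.span {monomial (m i) (1 : k)})
      = Ideal.span ((fun g => (X g : MvPolynomial (Fin n) k)) ''
          {g | ∃ l : Fin t, l < i ∧ Finsupp.single g 1 + m i = m l ⊔ m i}) :=
  stmt_1_general k n t m hshell
end

section
/- Let M be a matroid on the ground set {1,...,n} and let B_i, B_j be bases of M with x^{B_j} <_lex x^{B_i}, i.e., the minimum element of the symmetric difference B_i Δ B_j belongs to B_i. Then there exist an element g ∈ B_j ∖ B_i and a basis B_k of M such that x^{B_k} <_lex x^{B_i} and B_k ∪ B_i = B_i ∪ {g}. (In monomial language: the squarefree matroidal ideal generated by the monomials x^B over the bases B of M is shellable with respect to the lexicographic order, since x_g·x^{B_i} = lcm(x^{B_k}, x^{B_i}) divides lcm(x^{B_j}, x^{B_i}).) -/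
open scoped symmDiff

/-!
Let `a` be the minimum of `Bi ∆ Bj`, so `a ∈ Bi \ Bj`. Basis exchange gives `g ∈ Bj \ Bi` with
`Bk = Bi - a + g` a basis. Then `Bi ∆ Bk = {a, g}`, and `a < g` because `g ∈ Bi ∆ Bj`, so `Bk`
precedes `Bi` lexicographically, while `Bk ∪ Bi = Bi + g`.
-/

/-- `lexLT B' B` encodes `x^{B'} <_lex x^{B}` in the lexicographic order with
`x_1 > x_2 > … > x_n`: the minimum element of the symmetric difference `B ∆ B'`
belongs to `B`. -/
def lexLT {n : ℕ} (B' B : Finset (Fin n)) : Prop :=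
  ∃ a ∈ B, a ∈ B ∆ B' ∧ ∀ b ∈ B ∆ B', a ≤ b

namespace Finset

variable {α : Type*} [DecidableEq α] {s : Finset α} {a g : α}

theorem symmDiff_insert_erase (ha : a ∈ s) (hg : g ∉ s) :
    s ∆ insert g (s.erase a) = {a, g} := by
  ext b
  simp only [mem_symmDiff, mem_insert, mem_erase, mem_singleton]
  constructor
  · rintro (⟨hbs, hb⟩ | ⟨rfl | ⟨-, hbs⟩, hb⟩) <;> tauto
  · rintro (rfl | rfl)
    · exact Or.inl ⟨ha, by rintro (rfl | ⟨h, -⟩) <;> simp_all⟩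
    · exact Or.inr ⟨Or.inl rfl, hg⟩

theorem insert_erase_union_self (a g : α) (s : Finset α) :
    insert g (s.erase a) ∪ s = insert g s := by
  rw [insert_union, union_eq_right.mpr (erase_subset a s)]

end Finset

section LexLT

variable {n : ℕ} {B : Finset (Fin n)} {a g : Fin n}

theorem lexLT_insert_erase (ha : a ∈ B) (hg : g ∉ B) (hag : a ≤ g) :
    lexLT (insert g (B.erase a)) B := by
  rw [lexLT, Finset.symmDiff_insert_erase ha hg]
  refine ⟨a, ha, Finset.mem_insert_self a _, ?_⟩
  simp only [Finset.mem_insert, Finset.mem_singleton]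
  rintro b (rfl | rfl)
  exacts [le_rfl, hag]

end LexLT

theorem stmt_2_general {n : ℕ} (M : Matroid (Fin n))
    (Bi Bj : Finset (Fin n)) (hBi : M.IsBase ↑Bi) (hBj : M.IsBase ↑Bj)
    (hlex : lexLT Bj Bi) :
    ∃ g ∈ Bj \ Bi, ∃ Bk : Finset (Fin n),
      M.IsBase ↑Bk ∧ lexLT Bk Bi ∧ Bk ∪ Bi = insert g Bi := by
  obtain ⟨a, haBi, haΔ, hamin⟩ := hlex
  have haBj : a ∉ Bj := ((Finset.mem_symmDiff.mp haΔ).resolve_right fun h ↦ h.2 haBi).2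
  obtain ⟨g, ⟨hgBj, hgBi⟩, hBk⟩ := hBi.exchange hBj (e := a) ⟨haBi, haBj⟩
  have hag : a ≤ g := hamin g (Finset.mem_symmDiff.mpr (Or.inr ⟨hgBj, hgBi⟩))
  refine ⟨g, Finset.mem_sdiff.mpr ⟨hgBj, hgBi⟩, insert g (Bi.erase a), ?_,
    lexLT_insert_erase haBi hgBi hag, Finset.insert_erase_union_self a g Bi⟩
  rwa [Finset.coe_insert, Finset.coe_erase]

/-- Let `M` be a matroid on the ground set `{1,…,n}` and let `Bi, Bj` be
bases of `M` with `x^{Bj} <_lex x^{Bi}`.  Then there exist an element `g ∈ Bj ∖ Bi` and a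
basis `Bk` of `M` such that `x^{Bk} <_lex x^{Bi}` and `Bk ∪ Bi = Bi ∪ {g}`.
(This says the squarefree matroidal ideal is shellable with respect to the lexicographic
order, since `x_g·x^{Bi} = lcm(x^{Bk}, x^{Bi})` divides `lcm(x^{Bj}, x^{Bi})`.) -/
theorem stmt_2 {n : ℕ} (M : Matroid (Fin n)) (hE : M.E = Set.univ)
    (Bi Bj : Finset (Fin n)) (hBi : M.IsBase ↑Bi) (hBj : M.IsBase ↑Bj)
    (hlex : lexLT Bj Bi) :
    ∃ g ∈ Bj \ Bi, ∃ Bk : Finset (Fin n),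
      M.IsBase ↑Bk ∧ lexLT Bk Bi ∧ Bk ∪ Bi = insert g Bi :=
  stmt_2_general M Bi Bj hBi hBj hlex
end

section
/- Let M be a matroid on the ground set {1,...,n} with bases B_1, ..., B_t listed so that x^{B_1} <_lex x^{B_2} <_lex ... <_lex x^{B_t}, and let I ⊆ S be the squarefree matroidal ideal generated by x^{B_1}, ..., x^{B_t}. Then I has linear quotients with respect to this ordering: for every 1 < i ≤ t the colon ideal (x^{B_1}, ..., x^{B_{i−1}}) : x^{B_i} is generated by a subset of the variables x_1, ..., x_n. -/
open MvPolynomial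
open scoped symmDiff

/-!
If `B_j <_lex B_i`, let `a` be the least element of `B_i ∆ B_j`; it lies in `B_i \ B_j`.
Basis exchange gives `b ∈ B_j \ B_i` such that `B_l = B_i - a + b` is a basis, and `a < b`
makes `B_l <_lex B_i`, so `l < i`. Then `x_b x^{B_i} = x_a x^{B_l}` puts `x_b` in the colon
ideal, and `x_b` divides the cofactor `x^{B_j} / gcd(x^{B_j}, x^{B_i})`. Hence every monomial
of an element of the colon ideal is divisible by a variable lying in the colon ideal.
-/

section MonomialIdeal

variable {σ R ι : Type*} [CommSemiring R]

theorem prod_X_eq_monomial (s : Finset σ) :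
    ∏ a ∈ s, (X a : MvPolynomial σ R) = monomial (∑ a ∈ s, Finsupp.single a 1) 1 :=
  (monomial_sum_one s _).symm

theorem eq_span_X_of_le_colon_span_monomial {d : ι → σ →₀ ℕ} {S : Set ι} {u : σ →₀ ℕ}
    {Q : Ideal (MvPolynomial σ R)}
    (hQ : Q ≤ (Ideal.span ((fun j => monomial (d j) (1 : R)) '' S)).colon
      (Ideal.span {(monomial u 1 : MvPolynomial σ R)}))
    (hwit : ∀ j ∈ S, ∃ b, u b < d j b ∧ X b ∈ Q) :
    Q = Ideal.span (X '' {b | X b ∈ Q}) := by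
  refine le_antisymm (fun f hf => ?_) (Ideal.span_le.mpr (Set.image_subset_iff.mpr fun _ h => h))
  rw [mem_ideal_span_X_image]
  intro c hc
  have hfu := Ideal.mem_colon_span_singleton.mp (hQ hf)
  rw [← Set.image_image (fun e => monomial e (1 : R)), mem_ideal_span_monomial_image] at hfu
  have hcu : c + u ∈ (f * monomial u 1).support := by
    rwa [mem_support_iff, coeff_mul_monomial, mul_one, ← mem_support_iff]
  obtain ⟨_, ⟨j, hj, rfl⟩, hle⟩ := hfu _ hcu
  obtain ⟨b, hub, hXb⟩ := hwit j hj
  have := hle b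
  exact ⟨b, hXb, by rw [Finsupp.add_apply] at this; omega⟩

end MonomialIdeal

theorem Finset.mul_prod_eq_mul_prod_insert_erase {α β : Type*} [DecidableEq α] [CommMonoid β]
    {s : Finset α} {a b : α} (ha : a ∈ s) (hb : b ∉ s) (f : α → β) :
    f b * ∏ x ∈ s, f x = f a * ∏ x ∈ insert b (s.erase a), f x := by
  rw [prod_insert fun h => hb (mem_of_mem_erase h), ← mul_prod_erase s f ha, mul_left_comm]

section Lex

variable {n : ℕ}

theorem lexLT_asymm {B B' : Finset (Fin n)} (h : lexLT B' B) : ¬ lexLT B B' := by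
  obtain ⟨a, haB, haΔ, hamin⟩ := h
  rintro ⟨a', ha'B, ha'Δ, ha'min⟩
  rw [symmDiff_comm] at ha'Δ ha'min
  obtain rfl : a = a' := le_antisymm (hamin _ ha'Δ) (ha'min _ haΔ)
  rcases Finset.mem_symmDiff.mp haΔ with ⟨_, hnB'⟩ | ⟨_, hnB⟩
  exacts [hnB' ha'B, hnB haB]

theorem lt_of_lexLT_of_sorted {ι : Type*} [LinearOrder ι] {B : ι → Finset (Fin n)}
    (hsort : ∀ i j, i < j → lexLT (B i) (B j)) {i j : ι} (h : lexLT (B i) (B j)) : i < j := by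
  by_contra hji
  rcases (not_lt.mp hji).lt_or_eq with hji | rfl
  exacts [lexLT_asymm h (hsort _ _ hji), lexLT_asymm h h]

theorem lexLT_insert_erase_s3 {B : Finset (Fin n)} {a b : Fin n} (ha : a ∈ B) (hb : b ∉ B)
    (hab : a ≤ b) : lexLT (insert b (B.erase a)) B := by
  have hba : b ≠ a := fun h => hb (h ▸ ha)
  refine ⟨a, ha, by simp [Finset.mem_symmDiff, ha, hba.symm], fun y hy => ?_⟩
  rcases Finset.mem_symmDiff.mp hy with ⟨hyB, hy⟩ | ⟨hy, hyB⟩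
  · obtain rfl : y = a := by by_contra h; simp [h, hyB] at hy
    exact le_rfl
  · obtain rfl : y = b := by by_contra h; simp [h, hyB] at hy
    exact hab

theorem Matroid.IsBase.exists_insert_erase_lexLT {M : Matroid (Fin n)} {B B' : Finset (Fin n)}
    (hB : M.IsBase ↑B) (hB' : M.IsBase ↑B') (hlt : lexLT B' B) :
    ∃ a ∈ B, ∃ b ∈ B', b ∉ B ∧
      M.IsBase ↑(insert b (B.erase a)) ∧ lexLT (insert b (B.erase a)) B := by
  obtain ⟨a, haB, haΔ, hamin⟩ := hlt
  have haB' : a ∉ B' := by simpa [Finset.mem_symmDiff, haB] using haΔ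
  obtain ⟨b, ⟨hbB', hbB⟩, hbase⟩ :=
    hB.exchange hB' (show a ∈ (↑B : Set _) \ ↑B' from ⟨haB, haB'⟩)
  have hab : a ≤ b := hamin b (Finset.mem_symmDiff.mpr (Or.inr ⟨hbB', hbB⟩))
  refine ⟨a, haB, b, hbB', hbB, by rwa [Finset.coe_insert, Finset.coe_erase],
    lexLT_insert_erase_s3 haB hbB hab⟩

end Lex

theorem stmt_3_general (k : Type) [Field k] (n t : ℕ)
    (M : Matroid (Fin n))
    (B : Fin t → Finset (Fin n))
    (hbase : ∀ i, M.IsBase ↑(B i))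
    (hall : ∀ C : Finset (Fin n), M.IsBase ↑C → ∃ i, B i = C)
    (hsort : ∀ i j : Fin t, i < j → lexLT (B i) (B j)) :
    ∀ i : Fin t, 0 < (i : ℕ) → ∃ V : Set (Fin n),
      Submodule.colon
        (Ideal.span ((fun j => ∏ a ∈ B j, (X a : MvPolynomial (Fin n) k)) '' {j | j < i}))
        (Ideal.span {∏ a ∈ B i, (X a : MvPolynomial (Fin n) k)})
      = Ideal.span ((fun g => (X g : MvPolynomial (Fin n) k)) '' V) := by
  intro i _
  simp only [prod_X_eq_monomial]
  refine ⟨_, eq_span_X_of_le_colon_span_monomial le_rfl fun j hj => ?_⟩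
  obtain ⟨a, ha, b, hbj, hbi, hbase', hlex⟩ :=
    (hbase i).exists_insert_erase_lexLT (hbase j) (hsort j i hj)
  obtain ⟨l, hl⟩ := hall _ hbase'
  have hli : l < i := lt_of_lexLT_of_sorted hsort (hl ▸ hlex)
  refine ⟨b, by simp [Finsupp.finsetSum_apply, Finsupp.single_apply, hbi, hbj], ?_⟩
  rw [Ideal.mem_colon_span_singleton, ← prod_X_eq_monomial,
    Finset.mul_prod_eq_mul_prod_insert_erase ha hbi, ← hl, prod_X_eq_monomial]
  exact Ideal.mul_mem_left _ _ (Ideal.subset_span ⟨l, hli, rfl⟩)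

/-- Let `M` be a matroid on `{1,…,n}` with bases `B_1, …, B_t` listed so
that `x^{B_1} <_lex … <_lex x^{B_t}`, and let `I ⊆ S = k[x_1,…,x_n]` be the squarefree
matroidal ideal generated by the `x^{B_i}`.  Then `I` has linear quotients with respect to
this ordering: for every `1 < i ≤ t` the colon ideal `(x^{B_1}, …, x^{B_{i−1}}) : x^{B_i}`
is generated by a subset of the variables `x_1, …, x_n`. -/
theorem stmt_3 (k : Type) [Field k] (n t : ℕ)
    (M : Matroid (Fin n)) (hE : M.E = Set.univ)
    (B : Fin t → Finset (Fin n))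
    (hbase : ∀ i, M.IsBase ↑(B i))
    (hall : ∀ C : Finset (Fin n), M.IsBase ↑C → ∃ i, B i = C)
    (hsort : ∀ i j : Fin t, i < j → lexLT (B i) (B j)) :
    ∀ i : Fin t, 0 < (i : ℕ) → ∃ V : Set (Fin n),
      Submodule.colon
        (Ideal.span ((fun j => ∏ a ∈ B j, (X a : MvPolynomial (Fin n) k)) '' {j | j < i}))
        (Ideal.span {∏ a ∈ B i, (X a : MvPolynomial (Fin n) k)})
      = Ideal.span ((fun g => (X g : MvPolynomial (Fin n) k)) '' V) :=
  stmt_3_general k n t M B hbase hall hsort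
end

section
/- Let I ⊆ S be a monomial ideal with linear quotients with respect to the ordering m_1, ..., m_t of its minimal monomial generators, and let A_i be the associated critical-index sets. Then every monomial w ∈ I can be written in exactly one way as w = u·m_i where 1 ≤ i ≤ t and u is a monomial with supp(u) ∩ A_i = ∅. -/
/-!
Existence: if `m_i ∣ w` and some variable `x_j` of `w / m_i` is critical for `m_i`, then some
`m_l` with `l < i` divides `x_j m_i`, hence `w`; descending along the well-founded order of the
indices ends at a decomposition with no critical variable left. Uniqueness of the index: if
`w = u m_i = v m_l` with `l < i`, then `u` lies in the colon ideal at `i`; as that ideal is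
generated by variables, some variable of `u` already lies in it, i.e. is critical. The cofactor
is then determined by cancellation.
-/

open MvPolynomial

namespace MvPolynomial

section MonomialIdeals

variable {σ ι : Type*} (R : Type*) [CommSemiring R] [Nontrivial R]

theorem monomial_one_mem_span_monomial_one_image_iff {s : Set (σ →₀ ℕ)}
    {α : σ →₀ ℕ} :
    monomial α (1 : R) ∈ Ideal.span ((fun s => monomial s (1 : R)) '' s) ↔
      ∃ β ∈ s, β ≤ α := by
  classical
  simp only [mem_ideal_span_monomial_image, support_monomial, if_neg one_ne_zero,
    Finset.mem_singleton, forall_eq]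

theorem monomial_one_mem_span_range_iff (m : ι → σ →₀ ℕ) {α : σ →₀ ℕ} :
    monomial α (1 : R) ∈ Ideal.span (Set.range fun i => monomial (m i) (1 : R)) ↔
      ∃ i, m i ≤ α := by
  rw [Set.range_comp' (fun s => monomial s (1 : R)) m,
    monomial_one_mem_span_monomial_one_image_iff]
  simp

variable {R} in
theorem exists_mem_support_X_mem_of_monomial_one_mem {I : Ideal (MvPolynomial σ R)} {V : Set σ}
    (hI : I = Ideal.span (X '' V)) {u : σ →₀ ℕ} (hu : monomial u (1 : R) ∈ I) :
    ∃ j ∈ u.support, X j ∈ I := by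
  classical
  rw [hI, mem_ideal_span_X_image] at hu
  obtain ⟨j, hjV, hju⟩ := hu u (by simp only [support_monomial, if_neg one_ne_zero,
    Finset.mem_singleton])
  exact ⟨j, Finsupp.mem_support_iff.2 hju, hI ▸ Ideal.subset_span ⟨j, hjV, rfl⟩⟩

end MonomialIdeals

section LinearQuotients

variable {σ ι : Type*} (R : Type*) [CommSemiring R] (m : ι → σ →₀ ℕ)

noncomputable def precedingIdeal [LT ι] (i : ι) : Ideal (MvPolynomial σ R) :=
  Ideal.span ((fun l => monomial (m l) (1 : R)) '' {l | l < i})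

noncomputable def colonIdeal [LT ι] (i : ι) : Ideal (MvPolynomial σ R) :=
  (precedingIdeal R m i).colon (Ideal.span {monomial (m i) (1 : R)})

def criticalIndices [LT ι] (i : ι) : Set σ :=
  {j | X j ∈ colonIdeal R m i}

def IsStdDecomposition [LT ι] (α : σ →₀ ℕ) (i : ι) (u : σ →₀ ℕ) : Prop :=
  α = u + m i ∧ ∀ j ∈ u.support, j ∉ criticalIndices R m i

variable [Nontrivial R]

theorem monomial_one_mem_precedingIdeal_iff [LT ι] {i : ι} {α : σ →₀ ℕ} :
    monomial α (1 : R) ∈ precedingIdeal R m i ↔ ∃ l < i, m l ≤ α := by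
  rw [precedingIdeal, ← Set.image_image (fun s => monomial s (1 : R)) m,
    monomial_one_mem_span_monomial_one_image_iff]
  simp

theorem monomial_one_mem_colonIdeal_iff [LT ι] {i : ι} {u : σ →₀ ℕ} :
    monomial u (1 : R) ∈ colonIdeal R m i ↔ ∃ l < i, m l ≤ u + m i := by
  rw [colonIdeal, Ideal.mem_colon_span_singleton, monomial_mul, one_mul,
    monomial_one_mem_precedingIdeal_iff]

theorem mem_criticalIndices_iff [LT ι] {i : ι} {j : σ} :
    j ∈ criticalIndices R m i ↔ ∃ l < i, m l ≤ Finsupp.single j 1 + m i :=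
  monomial_one_mem_colonIdeal_iff R m

theorem exists_isStdDecomposition_of_le [Preorder ι] [WellFoundedLT ι] {α : σ →₀ ℕ}
    {i : ι} (hi : m i ≤ α) : ∃ l u, IsStdDecomposition R m α l u := by
  induction i using WellFoundedLT.induction with
  | _ i ih =>
    by_cases hcrit : ∃ j ∈ (α - m i).support, j ∈ criticalIndices R m i
    swap
    · exact ⟨i, α - m i, (tsub_add_cancel_of_le hi).symm,
        fun j hj hj' => hcrit ⟨j, hj, hj'⟩⟩
    obtain ⟨j, hj, hjcrit⟩ := hcrit
    obtain ⟨l, hli, hl⟩ := (mem_criticalIndices_iff R m).1 hjcrit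
    have hjα : Finsupp.single j 1 + m i ≤ α := by
      have : Finsupp.single j 1 ≤ α - m i :=
        Finsupp.single_le_iff.2 (Nat.one_le_iff_ne_zero.2 (Finsupp.mem_support_iff.1 hj))
      calc Finsupp.single j 1 + m i ≤ α - m i + m i := by gcongr
        _ = α := tsub_add_cancel_of_le hi
    exact ih l hli (hl.trans hjα)

theorem IsStdDecomposition.not_lt_of_eq_add [LT ι] {α u v : σ →₀ ℕ} {i l : ι}
    (hLQ : ∃ V : Set σ, colonIdeal R m i = Ideal.span (X '' V))
    (hu : IsStdDecomposition R m α i u) (hv : α = v + m l) : ¬ l < i := by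
  intro hli
  obtain ⟨V, hV⟩ := hLQ
  have hmem : monomial u (1 : R) ∈ colonIdeal R m i :=
    (monomial_one_mem_colonIdeal_iff R m).2 ⟨l, hli, hu.1 ▸ hv ▸ le_add_self⟩
  obtain ⟨j, hj, hjcrit⟩ := exists_mem_support_X_mem_of_monomial_one_mem hV hmem
  exact hu.2 j hj hjcrit

theorem IsStdDecomposition.unique [LinearOrder ι]
    (hLQ : ∀ i, ∃ V : Set σ, colonIdeal R m i = Ideal.span (X '' V))
    {α u v : σ →₀ ℕ} {i l : ι}
    (hu : IsStdDecomposition R m α i u) (hv : IsStdDecomposition R m α l v) :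
    l = i ∧ v = u := by
  obtain rfl : l = i := le_antisymm
    (not_lt.1 (hv.not_lt_of_eq_add R m (hLQ l) hu.1))
    (not_lt.1 (hu.not_lt_of_eq_add R m (hLQ i) hv.1))
  exact ⟨rfl, add_right_cancel (hv.1.symm.trans hu.1)⟩

end LinearQuotients

end MvPolynomial

theorem stmt_4_general (k : Type) [Field k] (n t : ℕ)
    (m : Fin t → (Fin n →₀ ℕ))
    -- linear quotients: each colon ideal is generated by a subset of the variables
    (hLQ : ∀ i : Fin t, ∃ V : Set (Fin n),
      Submodule.colon
        (Ideal.span ((fun j => monomial (m j) (1 : k)) '' {j | j < i}))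
        (Ideal.span {monomial (m i) (1 : k)})
      = Ideal.span ((fun g => (X g : MvPolynomial (Fin n) k)) '' V)) :
    ∀ α : Fin n →₀ ℕ,
      monomial α (1 : k) ∈ Ideal.span (Set.range fun i => monomial (m i) (1 : k)) →
      ∃! p : Fin t × (Fin n →₀ ℕ),
        α = p.2 + m p.1 ∧
        ∀ j ∈ p.2.support,
          (X j : MvPolynomial (Fin n) k) ∉
            Submodule.colon
              (Ideal.span ((fun l => monomial (m l) (1 : k)) '' {l | l < p.1}))
              (Ideal.span {monomial (m p.1) (1 : k)}) := by
  intro α hα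
  obtain ⟨i, hi⟩ := (monomial_one_mem_span_range_iff k m).1 hα
  obtain ⟨l, u, hu⟩ := exists_isStdDecomposition_of_le k m hi
  refine ⟨(l, u), hu, fun ⟨l', v⟩ hv => ?_⟩
  obtain ⟨rfl, rfl⟩ := IsStdDecomposition.unique k m hLQ hu hv
  rfl

/-- Let `I ⊆ S = k[x_1,…,x_n]` be a monomial ideal with linear quotients
with respect to the ordering `m_1, …, m_t` of its minimal monomial generators (encoded by
exponent vectors), and let `A_i = { j : x_j ∈ (m_1,…,m_{i−1}) : m_i }` be the associated
critical-index sets.  Then every monomial `w ∈ I` can be written in exactly one way as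
`w = u·m_i` where `1 ≤ i ≤ t` and `u` is a monomial with `supp(u) ∩ A_i = ∅`. -/
theorem stmt_4 (k : Type) [Field k] (n t : ℕ)
    (m : Fin t → (Fin n →₀ ℕ))
    (hmin : ∀ i j : Fin t, i ≠ j → ¬ m i ≤ m j)
    -- linear quotients: each colon ideal is generated by a subset of the variables
    (hLQ : ∀ i : Fin t, ∃ V : Set (Fin n),
      Submodule.colon
        (Ideal.span ((fun j => monomial (m j) (1 : k)) '' {j | j < i}))
        (Ideal.span {monomial (m i) (1 : k)})
      = Ideal.span ((fun g => (X g : MvPolynomial (Fin n) k)) '' V)) :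
    ∀ α : Fin n →₀ ℕ,
      monomial α (1 : k) ∈ Ideal.span (Set.range fun i => monomial (m i) (1 : k)) →
      ∃! p : Fin t × (Fin n →₀ ℕ),
        α = p.2 + m p.1 ∧
        ∀ j ∈ p.2.support,
          (X j : MvPolynomial (Fin n) k) ∉
            Submodule.colon
              (Ideal.span ((fun l => monomial (m l) (1 : k)) '' {l | l < p.1}))
              (Ideal.span {monomial (m p.1) (1 : k)}) :=
  stmt_4_general k n t m hLQ
end

section
/- Let I ⊆ S be a stable monomial ideal with minimal monomial generators listed in decreasing lexicographic order m_1 >_lex m_2 >_lex ... >_lex m_t (lexicographic order with x_1 > ... > x_n). Then for every 1 < i ≤ t, the colon ideal (m_1, ..., m_{i−1}) : m_i equals the ideal generated by the variables x_j with 1 ≤ j < max(supp(m_i)). In particular, I has linear quotients with respect to this ordering, with critical-index sets A_i = {1, ..., max(supp(m_i)) − 1}. -/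
/-!
Weight exponent vectors by `∑ j, j · α j`. Among the generators dividing a monomial `u ∈ I`, one
of minimal weight `γ` agrees with `u` in every variable before its last one: otherwise stability
moves a factor of that last variable to an earlier one, giving an element of `I` below `u` of
smaller weight. For `u = x_g · m_i` with `g < max(supp m_i)` this generator cannot be `m_i`, so
it is lexicographically larger than `m_i`, i.e. one of `m_1, …, m_{i-1}`. Conversely, an earlier
generator `m_j >_lex m_i` not dividing `m_i` first exceeds `m_i` at a variable before
`max(supp m_i)`, which therefore divides every monomial of the colon ideal.
-/

open MvPolynomial

theorem Finset.setOf_exists_max_lt {α : Type*} [LinearOrder α] (s : Finset α) :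
    {g | ∃ b ∈ s, (∀ l ∈ s, l ≤ b) ∧ g < b} = {g | ∃ c ∈ s, g < c} := by
  ext g
  constructor
  · rintro ⟨b, hb, -, hgb⟩
    exact ⟨b, hb, hgb⟩
  · rintro ⟨c, hc, hgc⟩
    exact ⟨s.max' ⟨c, hc⟩, s.max'_mem _, fun l hl => s.le_max' l hl,
      hgc.trans_le (s.le_max' c hc)⟩

theorem Finsupp.exists_lt_lt_mem_support_of_toLex_lt {σ : Type*} [LinearOrder σ]
    {a c : σ →₀ ℕ} (hlt : toLex a < toLex c) (hnle : ¬ a ≤ c) :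
    ∃ e, a e < c e ∧ ∃ l ∈ a.support, e < l := by
  obtain ⟨e, hbelow, he⟩ := Finsupp.Lex.lt_iff.mp hlt
  refine ⟨e, he, ?_⟩
  by_contra! habove
  refine hnle fun x => ?_
  rcases lt_trichotomy x e with hx | rfl | hx
  · exact (hbelow x hx).le
  · exact he.le
  · have : a x = 0 := Finsupp.notMem_support_iff.mp fun hmem => (habove x hmem).not_gt hx
    simp [this]

theorem monomial_mem_span_monomial_image_iff {σ R ι : Type*} [CommSemiring R] [Nontrivial R]
    (m : ι → σ →₀ ℕ) (s : Set ι) (α : σ →₀ ℕ) :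
    monomial α (1 : R) ∈ Ideal.span ((fun j => monomial (m j) (1 : R)) '' s) ↔
      ∃ j ∈ s, m j ≤ α := by
  classical
  rw [← Set.image_image (fun β => monomial β (1 : R)) m, mem_ideal_span_monomial_image,
    support_monomial, if_neg one_ne_zero]
  simp

theorem X_mem_span_X_image_iff {σ R : Type*} [CommSemiring R] [Nontrivial R] (s : Set σ)
    (g : σ) : (X g : MvPolynomial σ R) ∈ Ideal.span (X '' s) ↔ g ∈ s := by
  classical
  rw [mem_ideal_span_X_image, support_X]
  simp [Finsupp.single_apply]

/-- `U` stands for the set of exponent vectors of the monomials of an ideal. -/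
def IsStableExponents {σ : Type*} [LinearOrder σ] (U : Set (σ →₀ ℕ)) : Prop :=
  ∀ α ∈ U, ∀ b ∈ α.support, (∀ l ∈ α.support, l ≤ b) → ∀ i < b,
    α + Finsupp.single i 1 - Finsupp.single b 1 ∈ U

theorem IsStableExponents.exists_mem_le_eq_of_lt_mem_support {n : ℕ} {G : Set (Fin n →₀ ℕ)}
    (hG : IsStableExponents (upperClosure G : Set (Fin n →₀ ℕ))) {α : Fin n →₀ ℕ}
    (hα : α ∈ upperClosure G) :
    ∃ γ ∈ G, γ ≤ α ∧ ∀ e, ∀ c ∈ γ.support, e < c → γ e = α e := by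
  classical
  let w : (Fin n →₀ ℕ) →+ ℕ := Finsupp.weight fun e : Fin n => (e : ℕ)
  have hw : Monotone w := fun β δ h => by
    obtain ⟨d, rfl⟩ := le_iff_exists_add.mp h
    simp
  obtain ⟨γ, ⟨hγG, hγα⟩, hγmin⟩ := (measure w).wf.has_min {γ | γ ∈ G ∧ γ ≤ α} hα
  refine ⟨γ, hγG, hγα, fun e c hc hec => ?_⟩
  by_contra hne
  let b := γ.support.max' ⟨c, hc⟩
  have hb : b ∈ γ.support := γ.support.max'_mem _
  have heb : e < b := hec.trans_le (γ.support.le_max' c hc)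
  have hγ'α : γ + Finsupp.single e 1 - Finsupp.single b 1 ≤ α := fun y => by
    rw [Finsupp.tsub_apply, Finsupp.add_apply]
    rcases eq_or_ne y e with rfl | hye
    · rw [Finsupp.single_eq_same]
      have := (hγα y).lt_of_ne hne
      omega
    · simp only [Finsupp.single_eq_of_ne hye]
      exact (Nat.sub_le _ _).trans (hγα y)
  have hγ'w : w (γ + Finsupp.single e 1 - Finsupp.single b 1) < w γ := by
    have hbγ : Finsupp.single b 1 ≤ γ + Finsupp.single e 1 := by
      rw [Finsupp.single_le_iff]
      exact (Nat.one_le_iff_ne_zero.mpr (Finsupp.mem_support_iff.mp hb)).trans le_self_add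
    have := congrArg w (tsub_add_cancel_of_le hbγ)
    simp only [map_add, w, Finsupp.weight_single, smul_eq_mul, one_mul] at this ⊢
    have : (e : ℕ) < b := heb
    omega
  obtain ⟨δ, hδG, hδγ'⟩ := hG γ (subset_upperClosure hγG) b hb
    (fun l hl => γ.support.le_max' l hl) e heb
  exact hγmin δ ⟨hδG, hδγ'.trans hγ'α⟩ ((hw hδγ').trans_lt hγ'w)

theorem IsStableExponents.exists_toLex_lt_le_add_single {n : ℕ} {G : Set (Fin n →₀ ℕ)}
    (hG : IsStableExponents (upperClosure G : Set (Fin n →₀ ℕ)))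
    (hanti : IsAntichain (· ≤ ·) G) {γ : Fin n →₀ ℕ} (hγ : γ ∈ G) {g c : Fin n}
    (hc : c ∈ γ.support) (hgc : g < c) :
    ∃ δ ∈ G, toLex γ < toLex δ ∧ δ ≤ γ + Finsupp.single g 1 := by
  obtain ⟨δ, hδG, hδle, hδeq⟩ :=
    hG.exists_mem_le_eq_of_lt_mem_support (α := γ + Finsupp.single g 1) ⟨γ, hγ, le_self_add⟩
  have hδg : γ g < δ g := by
    by_contra! hδg
    have hδγ : δ ≤ γ := fun y => by
      rcases eq_or_ne y g with rfl | hyg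
      · exact hδg
      · simpa [Finsupp.single_eq_of_ne hyg] using hδle y
    have := hδeq g c (hanti.eq hδG hγ hδγ ▸ hc) hgc
    simp [hanti.eq hδG hγ hδγ] at this
  refine ⟨δ, hδG, Finsupp.Lex.lt_iff.mpr ⟨g, fun y hy => ?_, hδg⟩, hδle⟩
  have := hδeq y g (Finsupp.mem_support_iff.mpr (by omega)) hy
  simp [this, Finsupp.single_eq_of_ne hy.ne]

theorem colon_span_monomial_eq_span_X {R ι : Type*} [CommSemiring R] [Nontrivial R]
    [LinearOrder ι] {n : ℕ} (m : ι → Fin n →₀ ℕ)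
    (hstable : IsStableExponents (upperClosure (Set.range m) : Set (Fin n →₀ ℕ)))
    (hanti : IsAntichain (· ≤ ·) (Set.range m)) (hsort : StrictAnti fun i => toLex (m i))
    (i : ι) :
    Submodule.colon (Ideal.span ((fun j => monomial (m j) (1 : R)) '' {j | j < i}))
        (Ideal.span {monomial (m i) (1 : R)}) =
      Ideal.span (X '' {g | ∃ c ∈ (m i).support, g < c}) := by
  apply le_antisymm
  · intro p hp
    rw [Ideal.mem_colon_span_singleton, ← Set.image_image (fun β => monomial β (1 : R)) m,
      mem_ideal_span_monomial_image] at hp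
    rw [mem_ideal_span_X_image]
    intro β hβ
    have hβi : β + m i ∈ (p * monomial (m i) (1 : R)).support := by
      rwa [mem_support_iff, coeff_mul_monomial, mul_one, ← mem_support_iff]
    obtain ⟨_, ⟨j, hji, rfl⟩, hjβ⟩ := hp _ hβi
    obtain ⟨e, he, c, hc, hec⟩ := Finsupp.exists_lt_lt_mem_support_of_toLex_lt (hsort hji)
      (hanti ⟨i, rfl⟩ ⟨j, rfl⟩ fun h => (hsort hji).ne (congrArg toLex h))
    have := hjβ e
    exact ⟨e, ⟨c, hc, hec⟩, by simp only [Finsupp.add_apply] at this; omega⟩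
  · rw [Ideal.span_le]
    rintro _ ⟨g, ⟨c, hc, hgc⟩, rfl⟩
    obtain ⟨_, ⟨j, rfl⟩, hij, hj⟩ := hstable.exists_toLex_lt_le_add_single hanti ⟨i, rfl⟩ hc hgc
    rw [SetLike.mem_coe, Ideal.mem_colon_span_singleton, X, monomial_mul, one_mul,
      add_comm, monomial_mem_span_monomial_image_iff]
    exact ⟨j, StrictAnti.lt_iff_gt hsort |>.mp hij, hj⟩

/-- Let `I ⊆ S = k[x_1,…,x_n]` be a stable monomial ideal with minimal
monomial generators listed in decreasing lexicographic order (`x_1 > … > x_n`).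
Then for every `1 < i ≤ t` the colon ideal `(m_1, …, m_{i−1}) : m_i` equals the ideal
generated by the variables `x_j` with `j < max(supp(m_i))`.  In particular `I` has linear
quotients with respect to this ordering, with critical-index sets
`A_i = { j : x_j ∈ (m_1,…,m_{i−1}) : m_i } = {1, …, max(supp(m_i)) − 1}`.
(Generators are encoded by exponent vectors `m : Fin t → (Fin n →₀ ℕ)`; `max(supp(m_i))`
is encoded as an element `b ∈ supp(m_i)` with `l ≤ b` for all `l ∈ supp(m_i)`.) -/
theorem stmt_8 (k : Type) [Field k] (n t : ℕ)
    (m : Fin t → (Fin n →₀ ℕ))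
    (hmin : ∀ i j : Fin t, i ≠ j → ¬ m i ≤ m j)
    -- `I` is stable: for every monomial `x^α ∈ I` and every `i < max(supp α)`,
    -- `x_i·x^α/x_{max(supp α)} ∈ I`.
    (hstable : ∀ α : Fin n →₀ ℕ,
      monomial α (1 : k) ∈ Ideal.span (Set.range fun i => monomial (m i) (1 : k)) →
      ∀ b ∈ α.support, (∀ l ∈ α.support, l ≤ b) →
      ∀ i : Fin n, i < b →
        monomial (α + Finsupp.single i 1 - Finsupp.single b 1) (1 : k) ∈
          Ideal.span (Set.range fun i => monomial (m i) (1 : k)))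
    -- the generators are listed in decreasing lexicographic order
    (hsort : ∀ i j : Fin t, i < j → toLex (m j) < toLex (m i)) :
    ∀ i : Fin t, 0 < (i : ℕ) →
      (Submodule.colon
          (Ideal.span ((fun j => monomial (m j) (1 : k)) '' {j | j < i}))
          (Ideal.span {monomial (m i) (1 : k)})
        = Ideal.span ((fun g => (X g : MvPolynomial (Fin n) k)) ''
            {g | ∃ b ∈ (m i).support, (∀ l ∈ (m i).support, l ≤ b) ∧ g < b}))
      ∧
      {j : Fin n | (X j : MvPolynomial (Fin n) k) ∈
          Submodule.colon
            (Ideal.span ((fun l => monomial (m l) (1 : k)) '' {l | l < i}))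
            (Ideal.span {monomial (m i) (1 : k)})}
        = {g | ∃ b ∈ (m i).support, (∀ l ∈ (m i).support, l ≤ b) ∧ g < b} := by
  intro i _
  have hmem (α : Fin n →₀ ℕ) :
      monomial α (1 : k) ∈ Ideal.span (Set.range fun i => monomial (m i) (1 : k)) ↔
        α ∈ upperClosure (Set.range m) := by
    rw [← Set.image_univ, monomial_mem_span_monomial_image_iff]
    simp
  have hI : IsStableExponents (upperClosure (Set.range m) : Set (Fin n →₀ ℕ)) :=
    fun α hα b hb hbmax g hgb => (hmem _).mp (hstable α ((hmem α).mpr hα) b hb hbmax g hgb)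
  have hanti : IsAntichain (· ≤ ·) (Set.range m) := by
    rintro _ ⟨i, rfl⟩ _ ⟨j, rfl⟩ hij
    exact hmin i j (ne_of_apply_ne m hij)
  have hcolon := colon_span_monomial_eq_span_X (R := k) m hI hanti hsort i
  rw [Finset.setOf_exists_max_lt]
  refine ⟨hcolon, ?_⟩
  rw [hcolon]
  ext g
  exact X_mem_span_X_image_iff _ g
end

section
/- Let k be a field, S a k-algebra, and let X and Y be chain complexes of S-modules concentrated in non-negative degrees. Suppose that for each n there is a k-subspace V_n ⊆ X_n such that the S-linear map S ⊗_k V_n → X_n induced by scalar multiplication is an isomorphism. Suppose Y is equipped with k-linear maps c_n : Y_n → Y_{n+1} (n ≥ 0) satisfying c_{n+1} ∘ c_n = 0 for all n ≥ 0 and d_{n+1} ∘ c_n + c_{n−1} ∘ d_n = id_{Y_n} for all n ≥ 1. Let φ_0 : X_0 → Y_0 be an S-linear map satisfying d_1 ∘ c_0 ∘ φ_0 ∘ d_1^X = φ_0 ∘ d_1^X. Then there exists exactly one chain map φ : X → Y of complexes of S-modules with degree-0 component φ_0 and with φ_n(V_n) ⊆ range(c_{n−1}) for all n ≥ 1; moreover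 this φ satisfies φ_{n+1}(v) = c_n(φ_n(d_{n+1}^X v)) for all v ∈ V_{n+1}. -/
open TensorProduct

/-- a special case of MacLane, Theorem IX.6.2.
Let `k` be a field, `S` a `k`-algebra, and `X`, `Y` chain complexes of `S`-modules in
non-negative degrees.  Suppose each `X p` has a `k`-subspace `V p` such that the `S`-linear
map `S ⊗_k V p → X p` induced by scalar multiplication is bijective.  Suppose `Y` carries
`k`-linear maps `c p : Y p → Y (p+1)` with `c ∘ c = 0` and `d ∘ c + c ∘ d = id` in degrees
`≥ 1`.  Then every `S`-linear `φ₀ : X 0 → Y 0` with `d ∘ c ∘ φ₀ ∘ d = φ₀ ∘ d` lifts to a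
unique chain map `φ : X → Y` with `φ (V p) ⊆ range (c (p-1))` for `p ≥ 1`; moreover this
`φ` satisfies `φ (p+1) v = c p (φ p (d v))` for `v ∈ V (p+1)`. -/
theorem stmt_11 (k : Type) [Field k] (S : Type) [Ring S] [Algebra k S]
    (X Y : ℕ → Type)
    [∀ p, AddCommGroup (X p)] [∀ p, Module k (X p)] [∀ p, Module S (X p)]
    [∀ p, IsScalarTower k S (X p)]
    [∀ p, AddCommGroup (Y p)] [∀ p, Module k (Y p)] [∀ p, Module S (Y p)]
    [∀ p, IsScalarTower k S (Y p)]
    (dX : ∀ p, X (p + 1) →ₗ[S] X p) (hdX : ∀ p, (dX p) ∘ₗ (dX (p + 1)) = 0)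
    (dY : ∀ p, Y (p + 1) →ₗ[S] Y p) (hdY : ∀ p, (dY p) ∘ₗ (dY (p + 1)) = 0)
    (V : ∀ p, Submodule k (X p))
    (ψ : ∀ p, (S ⊗[k] (V p)) →ₗ[S] X p)
    (hψ : ∀ p (s : S) (v : V p), ψ p (s ⊗ₜ v) = s • (v : X p))
    (hbij : ∀ p, Function.Bijective (ψ p))
    (c : ∀ p, Y p →ₗ[k] Y (p + 1))
    (hcc : ∀ p (y : Y p), c (p + 1) (c p y) = 0)
    (hcontract : ∀ p (y : Y (p + 1)), dY (p + 1) (c (p + 1) y) + c p (dY p y) = y)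
    (φ0 : X 0 →ₗ[S] Y 0)
    (hφ0 : ∀ x : X 1, dY 0 (c 0 (φ0 (dX 0 x))) = φ0 (dX 0 x)) :
    (∃! φ : ∀ p, X p →ₗ[S] Y p,
      φ 0 = φ0 ∧ (∀ p, (φ p) ∘ₗ (dX p) = (dY p) ∘ₗ (φ (p + 1))) ∧
        (∀ p, ∀ v ∈ V (p + 1), φ (p + 1) v ∈ LinearMap.range (c p)))
    ∧
    (∀ φ : ∀ p, X p →ₗ[S] Y p,
      (φ 0 = φ0 ∧ (∀ p, (φ p) ∘ₗ (dX p) = (dY p) ∘ₗ (φ (p + 1))) ∧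
        (∀ p, ∀ v ∈ V (p + 1), φ (p + 1) v ∈ LinearMap.range (c p))) →
      ∀ p, ∀ v ∈ V (p + 1), φ (p + 1) v = c p (φ p (dX p v))) := by

  classical
  -- extensionality: S-linear maps out of X p agree if they agree on V p
  have hext : ∀ (p : ℕ) (Z : Type) [AddCommGroup Z] [Module S Z]
      (f g : X p →ₗ[S] Z), (∀ v : V p, f (v : X p) = g (v : X p)) → f = g := by
    intro p Z _ _ f g h
    ext x
    obtain ⟨t, rfl⟩ := (hbij p).2 x
    induction t with
    | zero => simp
    | tmul s v => rw [hψ, map_smul, map_smul, h v]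
    | add a b ha hb => rw [map_add, map_add, map_add, ha, hb]
  let e : ∀ p, (S ⊗[k] V p) ≃ₗ[S] X p := fun p => LinearEquiv.ofBijective (ψ p) (hbij p)
  have he : ∀ p t, e p t = ψ p t := fun p t => rfl
  let step : ∀ q, (X q →ₗ[S] Y q) → (X (q + 1) →ₗ[S] Y (q + 1)) := fun q f =>
    (TensorProduct.AlgebraTensorModule.lift
      (LinearMap.toSpanSingleton S ((V (q + 1)) →ₗ[k] Y (q + 1))
        ((c q).comp ((((f.comp (dX q)).restrictScalars k).comp (V (q + 1)).subtype))))) ∘ₗ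
      (e (q + 1)).symm.toLinearMap
  let φ : ∀ p, X p →ₗ[S] Y p := fun p => Nat.rec φ0 step p
  have hφz : φ 0 = φ0 := rfl
  have hsymm : ∀ p (v : V p), (e p).symm (v : X p) = (1 : S) ⊗ₜ[k] v := by
    intro p v
    apply (e p).injective
    rw [LinearEquiv.apply_symm_apply, he, hψ, one_smul]
  have hkey : ∀ p (v : V (p + 1)), φ (p + 1) (v : X (p + 1)) = c p (φ p (dX p v)) := by
    intro p v
    show (TensorProduct.AlgebraTensorModule.lift _) ((e (p + 1)).symm (v : X (p + 1))) = _
    rw [hsymm, TensorProduct.AlgebraTensorModule.lift_tmul, LinearMap.toSpanSingleton_apply,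
      one_smul]
    rfl
  have hchain : ∀ p, (φ p) ∘ₗ (dX p) = (dY p) ∘ₗ (φ (p + 1)) := by
    intro p
    induction p with
    | zero =>
      refine hext 1 (Y 0) _ _ ?_
      intro v
      show φ 0 (dX 0 v) = dY 0 (φ (0 + 1) (v : X (0 + 1)))
      rw [hkey 0 v, hφz, hφ0]
    | succ q ih =>
      refine hext (q + 2) (Y (q + 1)) _ _ ?_
      intro v
      show φ (q + 1) (dX (q + 1) v) = dY (q + 1) (φ (q + 2) (v : X (q + 2)))
      rw [hkey (q + 1) v]
      set y := φ (q + 1) (dX (q + 1) (v : X (q + 2))) with hy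
      have h1 : dY (q + 1) (c (q + 1) y) + c q (dY q y) = y := hcontract q y
      have h2 : dY q y = φ q (dX q (dX (q + 1) (v : X (q + 2)))) := by
        have := congrArg (fun f => f (dX (q + 1) (v : X (q + 2)))) ih
        exact this.symm
      have h3 : dX q (dX (q + 1) (v : X (q + 2))) = 0 := by
        have := congrArg (fun f => f (v : X (q + 2))) (hdX q)
        exact this
      rw [h2, h3, map_zero, map_zero, add_zero] at h1
      exact h1.symm
  have hrange : ∀ p, ∀ v ∈ V (p + 1), φ (p + 1) v ∈ LinearMap.range (c p) := by
    intro p v hv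
    rw [show v = ((⟨v, hv⟩ : V (p + 1)) : X (p + 1)) from rfl, hkey p ⟨v, hv⟩]
    exact ⟨_, rfl⟩
  -- any map satisfying the conditions satisfies the formula
  have hformula : ∀ φ' : ∀ p, X p →ₗ[S] Y p,
      (φ' 0 = φ0 ∧ (∀ p, (φ' p) ∘ₗ (dX p) = (dY p) ∘ₗ (φ' (p + 1))) ∧
        (∀ p, ∀ v ∈ V (p + 1), φ' (p + 1) v ∈ LinearMap.range (c p))) →
      ∀ p, ∀ v ∈ V (p + 1), φ' (p + 1) v = c p (φ' p (dX p v)) := by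
    rintro φ' ⟨-, hch, hrg⟩ p v hv
    obtain ⟨w, hw⟩ := hrg p v hv
    have h1 : dY (p + 1) (c (p + 1) (c p w)) + c p (dY p (c p w)) = c p w :=
      hcontract p (c p w)
    rw [hcc p w, map_zero, zero_add] at h1
    have h2 : φ' p (dX p v) = dY p (φ' (p + 1) v) :=
      congrArg (fun f => f v) (hch p)
    symm
    rw [h2, ← hw]
    exact h1
  refine ⟨⟨φ, ⟨hφz, hchain, hrange⟩, ?_⟩, hformula⟩
  intro φ' hφ'
  have hf' := hformula φ' hφ'
  obtain ⟨hz', hch', hrg'⟩ := hφ'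
  funext p
  induction p with
  | zero => rw [hz', hφz]
  | succ q ih =>
    refine hext (q + 1) (Y (q + 1)) _ _ ?_
    intro v
    rw [hf' q v v.2, ih, ← hkey q v]
end
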